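/- Let U0 = [[A0,B0],[C0,D0]] : X0 × D → X0 × D* and U1 = [[A1,B1],[C1,D1]] : X1 × D* → X1 × D be linear block maps between complex vector spaces with I − D1∘D0 bijective on D, and let U = F_ℓ(U0,U1) : X0 × X1 → X0 × X1 be the feedback connection. Then for every x0 ∈ X0 and x1 ∈ X1 there exist unique sequences ξ0 : ℕ → X0, ξ1 : ℕ → X1, d : ℕ → D, d* : ℕ → D* with ξ0(0) = x0, ξ1(0) = x1 and, for all n ∈ ℕ, (ξ0(n+1), d*(n)) = U0(ξ0(n), d(n)) and (ξ1(n+1), d(n)) = U1(ξ1(n), d*(n)); moreover these sequences satisfy (ξ0(n), ξ1(n)) = Uⁿ(x0, x1) for all n ∈ ℕ. -/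
import Mathlib


/-- **Powers of a feedback connection via trajectory-level feedback.**
Let `U0 = [[A0,B0],[C0,D0]] : X0 × D → X0 × D*` and `U1 = [[A1,B1],[C1,D1]] : X1 × D* → X1 × D`
with `I − D1∘D0` bijective (with two-sided linear inverse `E`, and `Es` a two-sided inverse of
`I − D0∘D1`), and let `U = F_ℓ(U0,U1)` be the feedback connection, given by the explicit
block formula.  Then for every `x0, x1` there exist unique sequences `ξ0, ξ1, d, d*` with
`ξ0 0 = x0`, `ξ1 0 = x1` satisfying the feedback system equations, and any such sequences
satisfy `(ξ0 n, ξ1 n) = Uⁿ (x0, x1)` for all `n`. -/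
theorem stmt_2 {X0 X1 D Ds : Type*}
    [AddCommGroup X0] [Module ℂ X0] [AddCommGroup X1] [Module ℂ X1]
    [AddCommGroup D] [Module ℂ D] [AddCommGroup Ds] [Module ℂ Ds]
    (A0 : X0 →ₗ[ℂ] X0) (B0 : D →ₗ[ℂ] X0) (C0 : X0 →ₗ[ℂ] Ds) (D0 : D →ₗ[ℂ] Ds)
    (A1 : X1 →ₗ[ℂ] X1) (B1 : Ds →ₗ[ℂ] X1) (C1 : X1 →ₗ[ℂ] D) (D1 : Ds →ₗ[ℂ] D)
    (hbij : Function.Bijective (LinearMap.id - D1 ∘ₗ D0 : D →ₗ[ℂ] D))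
    (E : D →ₗ[ℂ] D)
    (hE1 : E ∘ₗ (LinearMap.id - D1 ∘ₗ D0) = LinearMap.id)
    (hE2 : (LinearMap.id - D1 ∘ₗ D0) ∘ₗ E = LinearMap.id)
    (Es : Ds →ₗ[ℂ] Ds)
    (hEs1 : Es ∘ₗ (LinearMap.id - D0 ∘ₗ D1) = LinearMap.id)
    (hEs2 : (LinearMap.id - D0 ∘ₗ D1) ∘ₗ Es = LinearMap.id)
    (U : (X0 × X1) →ₗ[ℂ] (X0 × X1))
    (hU : ∀ (x0 : X0) (x1 : X1),
        U (x0, x1) = (A0 x0 + B0 (E (D1 (C0 x0) + C1 x1)),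
                      A1 x1 + B1 (Es (C0 x0 + D0 (C1 x1))))) :
    ∀ (x0 : X0) (x1 : X1),
      (∃! q : (ℕ → X0) × (ℕ → X1) × (ℕ → D) × (ℕ → Ds),
          q.1 0 = x0 ∧ q.2.1 0 = x1 ∧
          ∀ n : ℕ,
            q.1 (n + 1) = A0 (q.1 n) + B0 (q.2.2.1 n) ∧
            q.2.2.2 n = C0 (q.1 n) + D0 (q.2.2.1 n) ∧
            q.2.1 (n + 1) = A1 (q.2.1 n) + B1 (q.2.2.2 n) ∧
            q.2.2.1 n = C1 (q.2.1 n) + D1 (q.2.2.2 n)) ∧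
      (∀ (ξ0 : ℕ → X0) (ξ1 : ℕ → X1) (d : ℕ → D) (ds : ℕ → Ds),
          ξ0 0 = x0 → ξ1 0 = x1 →
          (∀ n : ℕ,
            ξ0 (n + 1) = A0 (ξ0 n) + B0 (d n) ∧
            ds n = C0 (ξ0 n) + D0 (d n) ∧
            ξ1 (n + 1) = A1 (ξ1 n) + B1 (ds n) ∧
            d n = C1 (ξ1 n) + D1 (ds n)) →
          ∀ n : ℕ, (U ^ n) (x0, x1) = (ξ0 n, ξ1 n)) := by

  intro x0 x1
  have hE1' : ∀ v : D, E (v - D1 (D0 v)) = v := fun v => by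
    have := LinearMap.ext_iff.mp hE1 v
    simpa using this
  have hE2' : ∀ v : D, E v - D1 (D0 (E v)) = v := fun v => by
    have := LinearMap.ext_iff.mp hE2 v
    simpa using this
  have hEs1' : ∀ v : Ds, Es (v - D0 (D1 v)) = v := fun v => by
    have := LinearMap.ext_iff.mp hEs1 v
    simpa using this
  -- key uniqueness of feedback solution
  have key : ∀ (a : X0) (b : X1) (d : D) (ds : Ds),
      ds = C0 a + D0 d → d = C1 b + D1 ds →
      d = E (D1 (C0 a) + C1 b) ∧ ds = Es (C0 a + D0 (C1 b)) := by
    intro a b d ds h1 h2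
    have hd : d - D1 (D0 d) = D1 (C0 a) + C1 b := by
      calc d - D1 (D0 d) = (C1 b + D1 (C0 a + D0 d)) - D1 (D0 d) := by
            rw [← h1, ← h2]
        _ = D1 (C0 a) + C1 b := by rw [map_add]; abel
    have hds : ds - D0 (D1 ds) = C0 a + D0 (C1 b) := by
      calc ds - D0 (D1 ds) = (C0 a + D0 (C1 b + D1 ds)) - D0 (D1 ds) := by
            rw [← h2, ← h1]
        _ = C0 a + D0 (C1 b) := by rw [map_add]; abel
    constructor
    · rw [← hd, hE1']
    · rw [← hds, hEs1']
  -- canonical trajectories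
  set p : ℕ → X0 × X1 := fun n => (U ^ n) (x0, x1) with hp
  have hp0 : p 0 = (x0, x1) := by simp [hp]
  have hpS : ∀ n, p (n + 1) = U (p n) := by
    intro n
    simp [hp, pow_succ', Module.End.mul_apply]
  set F0 : ℕ → X0 := fun n => (p n).1 with hF0
  set F1 : ℕ → X1 := fun n => (p n).2 with hF1
  set Fd : ℕ → D := fun n => E (D1 (C0 (F0 n)) + C1 (F1 n)) with hFd
  set Fds : ℕ → Ds := fun n => C0 (F0 n) + D0 (Fd n) with hFds
  -- Fd solves the fixed-point equation
  have hFdfp : ∀ n, Fd n = C1 (F1 n) + D1 (Fds n) := by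
    intro n
    have h2 := eq_add_of_sub_eq (hE2' (D1 (C0 (F0 n)) + C1 (F1 n)))
    simp only [hFd, hFds]
    conv_lhs => rw [h2]
    simp only [map_add]
    abel
  have hkeyF : ∀ n, Fd n = E (D1 (C0 (F0 n)) + C1 (F1 n)) ∧
      Fds n = Es (C0 (F0 n) + D0 (C1 (F1 n))) :=
    fun n => key (F0 n) (F1 n) (Fd n) (Fds n) rfl (hFdfp n)
  have hsys : ∀ n : ℕ,
      F0 (n + 1) = A0 (F0 n) + B0 (Fd n) ∧
      Fds n = C0 (F0 n) + D0 (Fd n) ∧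
      F1 (n + 1) = A1 (F1 n) + B1 (Fds n) ∧
      Fd n = C1 (F1 n) + D1 (Fds n) := by
    intro n
    have hstep : p (n + 1) = (A0 (F0 n) + B0 (E (D1 (C0 (F0 n)) + C1 (F1 n))),
        A1 (F1 n) + B1 (Es (C0 (F0 n) + D0 (C1 (F1 n))))) := by
      rw [hpS n]
      have : p n = (F0 n, F1 n) := rfl
      rw [this, hU]
    refine ⟨?_, rfl, ?_, hFdfp n⟩
    · have := congrArg Prod.fst hstep
      simpa [hF0, hFd] using this
    · have := congrArg Prod.snd hstep
      have h2 := (hkeyF n).2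
      simp only [hF1] at this ⊢
      rw [this, ← h2]
  -- uniqueness of trajectories
  have huniq : ∀ (ξ0 : ℕ → X0) (ξ1 : ℕ → X1) (d : ℕ → D) (ds : ℕ → Ds),
      ξ0 0 = x0 → ξ1 0 = x1 →
      (∀ n : ℕ,
        ξ0 (n + 1) = A0 (ξ0 n) + B0 (d n) ∧
        ds n = C0 (ξ0 n) + D0 (d n) ∧
        ξ1 (n + 1) = A1 (ξ1 n) + B1 (ds n) ∧
        d n = C1 (ξ1 n) + D1 (ds n)) →
      ∀ n : ℕ, ξ0 n = F0 n ∧ ξ1 n = F1 n ∧ d n = Fd n ∧ ds n = Fds n := by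
    intro ξ0 ξ1 d ds h0 h1 h
    have hstate : ∀ n, ξ0 n = F0 n ∧ ξ1 n = F1 n := by
      intro n
      induction n with
      | zero =>
        constructor
        · simp [h0, hF0, hp0]
        · simp [h1, hF1, hp0]
      | succ n ih =>
        have hk := key (ξ0 n) (ξ1 n) (d n) (ds n) (h n).2.1 (h n).2.2.2
        have hdn : d n = Fd n := by
          rw [hk.1, ih.1, ih.2, (hkeyF n).1]
        have hdsn : ds n = Fds n := by
          rw [(h n).2.1, ih.1, hdn, hFds]
        constructor
        · rw [(h n).1, ih.1, hdn, (hsys n).1]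
        · rw [(h n).2.2.1, ih.2, hdsn, (hsys n).2.2.1]
    intro n
    have hk := key (ξ0 n) (ξ1 n) (d n) (ds n) (h n).2.1 (h n).2.2.2
    have hdn : d n = Fd n := by
      rw [hk.1, (hstate n).1, (hstate n).2, (hkeyF n).1]
    have hdsn : ds n = Fds n := by
      rw [(h n).2.1, (hstate n).1, hdn, hFds]
    exact ⟨(hstate n).1, (hstate n).2, hdn, hdsn⟩
  constructor
  · refine ⟨(F0, F1, Fd, Fds), ⟨?_, ?_, hsys⟩, ?_⟩
    · simp [hF0, hp0]
    · simp [hF1, hp0]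
    · rintro ⟨g0, g1, gd, gds⟩ ⟨hg0, hg1, hg⟩
      have := huniq g0 g1 gd gds hg0 hg1 hg
      refine Prod.ext ?_ (Prod.ext ?_ (Prod.ext ?_ ?_)) <;>
        · funext n
          first
          | exact (this n).1
          | exact (this n).2.1
          | exact (this n).2.2.1
          | exact (this n).2.2.2
  · intro ξ0 ξ1 d ds h0 h1 h n
    have := huniq ξ0 ξ1 d ds h0 h1 h n
    show p n = (ξ0 n, ξ1 n)
    rw [this.1, this.2.1]
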